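/- arXiv:2202.01969 — 3 statements merged into one kernel-verified Lean document; each statement's English description precedes it below -/
import Mathlib

section
/- Let R > 0 and μ > 0. Define R_i : [0, π/2) → ℝ by R_i(u) = R/μ + √((S(u) − r(u))²·(S(u) − l(u)) / S(u)), where r(u) = R/cos u, l(u) = 2·R·tan u, S(u) = (2·r(u) + l(u))/2. Then R_i is strictly monotonically increasing on [0, π/2). -/
/-!
With `s = sin u`, the sides of the triangle give `S - r = R tan u`, `S - l = R (1 - s) / cos u`
and `S = R (1 + s) / cos u`; since `cos² u = (1 - s)(1 + s)` the radicand collapses to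
`(R s / (1 + s))²`. Hence `R_i(u) = R / μ + R · s / (1 + s)`, a strictly increasing function of
`s = sin u`, which is itself strictly increasing on `[0, π/2)`.
-/

open Real

/-- The varying curvature radius of the geometric controller (Eq. (12)). -/
noncomputable def Ri (R μ : ℝ) (u : ℝ) : ℝ :=
  let r := R / Real.cos u
  let l := 2 * R * Real.tan u
  let S := (2 * r + l) / 2
  R / μ + Real.sqrt ((S - r) ^ 2 * (S - l) / S)

lemma one_add_sin_ne_zero_of_cos_ne_zero {u : ℝ} (hc : cos u ≠ 0) : 1 + sin u ≠ 0 := by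
  intro h
  have hs : sin u = -1 := by linarith
  have := sin_sq_add_cos_sq u
  rw [hs] at this
  exact hc (by nlinarith)

lemma Ri_eq_add_abs (R μ : ℝ) {u : ℝ} (hc : cos u ≠ 0) :
    Ri R μ u = R / μ + |R * sin u / (1 + sin u)| := by
  have hs := one_add_sin_ne_zero_of_cos_ne_zero hc
  have hradicand : ((2 * (R / cos u) + 2 * R * tan u) / 2 - R / cos u) ^ 2 *
      ((2 * (R / cos u) + 2 * R * tan u) / 2 - 2 * R * tan u) /
      ((2 * (R / cos u) + 2 * R * tan u) / 2) = (R * sin u / (1 + sin u)) ^ 2 := by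
    rw [tan_eq_sin_div_cos]
    rcases eq_or_ne R 0 with rfl | hR
    · simp
    field_simp
    linear_combination (-sin u ^ 2) * sin_sq_add_cos_sq u
  simp only [Ri]
  rw [hradicand, sqrt_sq_eq_abs]

lemma strictMonoOn_div_one_add : StrictMonoOn (fun x : ℝ => x / (1 + x)) (Set.Ioi (-1)) := by
  intro a ha b hb hab
  simp only [Set.mem_Ioi] at ha hb
  rw [div_lt_div_iff₀ (by linarith) (by linarith)]
  linarith

theorem Ri_strictMonoOn_general (R μ : ℝ) (hR : 0 < R) :
    StrictMonoOn (Ri R μ) (Set.Ico 0 (π / 2)) := by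
  have hsin : StrictMonoOn sin (Set.Ico 0 (π / 2)) :=
    strictMonoOn_sin.mono fun u hu => ⟨by linarith [pi_pos, hu.1], hu.2.le⟩
  have hsin_nonneg : Set.MapsTo sin (Set.Ico 0 (π / 2)) (Set.Ici 0) := fun u hu =>
    sin_nonneg_of_nonneg_of_le_pi hu.1 (by linarith [pi_pos, hu.2])
  have hRi : Set.EqOn (fun u => R / μ + R * (sin u / (1 + sin u))) (Ri R μ)
      (Set.Ico 0 (π / 2)) := fun u hu => by
    have hcos : 0 < cos u := cos_pos_of_mem_Ioo ⟨by linarith [pi_pos, hu.1], hu.2⟩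
    have hs : 0 ≤ sin u := hsin_nonneg hu
    rw [Ri_eq_add_abs R μ hcos.ne', abs_of_nonneg (by positivity), mul_div_assoc]
  have hfrac : StrictMonoOn (fun u => sin u / (1 + sin u)) (Set.Ico 0 (π / 2)) :=
    (strictMonoOn_div_one_add.mono fun x (hx : 0 ≤ x) => by
      simp only [Set.mem_Ioi]; linarith).comp hsin hsin_nonneg
  exact (((strictMono_mul_left_of_pos hR).comp_strictMonoOn hfrac).const_add (R / μ)).congr hRi

/-- **Strict monotonicity of the curvature radius `R_i`.**
Larger user steering angles produce a strictly larger curvature radius. -/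
theorem Ri_strictMonoOn (R μ : ℝ) (hR : 0 < R) (hμ : 0 < μ) :
    StrictMonoOn (Ri R μ) (Set.Ico 0 (π / 2)) :=
  Ri_strictMonoOn_general R μ hR
end

section
/- Let R > 0 and μ > 0. Define R_i : [0, π/2) → ℝ by R_i(u) = R/μ + √((S(u) − r(u))²·(S(u) − l(u)) / S(u)), where r(u) = R/cos u, l(u) = 2·R·tan u, S(u) = (2·r(u) + l(u))/2. Then for every u ∈ [0, π/2), R/μ ≤ R_i(u) < R/μ + R/2. -/
open Real

/-- **Two-sided bounds on the curvature radius `R_i`:**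
`R/μ ≤ R_i(u) < R/μ + R/2` for every `u ∈ [0, π/2)`. -/
theorem Ri_bounds (R μ : ℝ) (hR : 0 < R) (hμ : 0 < μ) :
    ∀ u ∈ Set.Ico 0 (π / 2), R / μ ≤ Ri R μ u ∧ Ri R μ u < R / μ + R / 2 := by
  intro u hu
  obtain ⟨hu0, hu1⟩ := hu
  have hc : 0 < Real.cos u := Real.cos_pos_of_mem_Ioo ⟨by linarith [Real.pi_pos], hu1⟩
  have hs0 : 0 ≤ Real.sin u := Real.sin_nonneg_of_nonneg_of_le_pi hu0
    (by linarith [Real.pi_pos])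
  have hs1 : Real.sin u < 1 := by
    rcases lt_or_eq_of_le (Real.sin_le_one u) with h | h
    · exact h
    · exfalso
      have := Real.sin_sq_add_cos_sq u
      nlinarith
  have hpyth : Real.cos u ^ 2 = 1 - Real.sin u ^ 2 := by
    have := Real.sin_sq_add_cos_sq u; linarith
  set s := Real.sin u
  set c := Real.cos u
  have htan : Real.tan u = s / c := Real.tan_eq_sin_div_cos u
  have hs1p : (0:ℝ) < 1 + s := by linarith
  have key : ((2 * (R / c) + 2 * R * Real.tan u) / 2 - R / c) ^ 2 *
      ((2 * (R / c) + 2 * R * Real.tan u) / 2 - 2 * R * Real.tan u) /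
      ((2 * (R / c) + 2 * R * Real.tan u) / 2)
      = R ^ 2 * s ^ 2 * (1 - s) / (c ^ 2 * (1 + s)) := by
    rw [htan]
    have hS : (2 * (R / c) + 2 * R * (s / c)) / 2 = R * (1 + s) / c := by
      field_simp
    rw [hS]
    have hR1 : R * (1 + s) ≠ 0 := by positivity
    field_simp
    ring
  have key2 : R ^ 2 * s ^ 2 * (1 - s) / (c ^ 2 * (1 + s))
      = R ^ 2 * s ^ 2 / (1 + s) ^ 2 := by
    rw [hpyth]
    have : (1 : ℝ) - s ^ 2 = (1 - s) * (1 + s) := by ring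
    rw [this, div_eq_div_iff (ne_of_gt (by nlinarith : (0:ℝ) < (1 - s) * (1 + s) * (1 + s)))
      (by positivity : ((1 + s) ^ 2 : ℝ) ≠ 0)]
    ring
  unfold Ri
  simp only
  rw [key, key2]
  constructor
  · nlinarith [Real.sqrt_nonneg (R ^ 2 * s ^ 2 / (1 + s) ^ 2)]
  · have hlt : R ^ 2 * s ^ 2 / (1 + s) ^ 2 < (R / 2) ^ 2 := by
      rw [div_lt_iff₀ (by positivity)]
      nlinarith [mul_pos (mul_pos (sub_pos.mpr hs1) (show (0:ℝ) < 1 + 3 * s by linarith)) (mul_pos hR hR)]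
    have := (Real.sqrt_lt' (by positivity : (0:ℝ) < R / 2)).2 hlt
    linarith
end

section
/- Let R > 0, μ > 0, λ_t > 0, v_c ∈ ℝ, T > 0, and let u ∈ ℝ be the user's velocity input and v ∈ ℝ the vehicle velocity. Define λ_s(v) = u if v ≤ v_c and λ_s(v) = u·exp(−(v − v_c)/T) otherwise, δ = λ_s(v)/λ_t, and for a steering angle u_ψ ∈ [0, π/2) let γ_s = 1/R_i(u_ψ) where R_i(u_ψ) = R/μ + √((S − r)²(S − l)/S) with r = R/cos u_ψ, l = 2R·tan u_ψ, S = (2r + l)/2. Then the controller's linear velocity input u_{v,c} = δ·(1 + R·γ_s) satisfies |u_{v,c}| ≤ |u|·(1 + μ)/λ_t. -/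
open Real

/-- **Velocity safety constraint (objective (iii)) of the assistive
controller.** Combining the rolling-rate design (Eq. (21)) with the
curvature-radius design (Eq. (12)), the controller's linear velocity input
`u_{v,c} = δ·(1 + R·γ_s)` is bounded by `|u|·(1 + μ)/λ_t`. -/
theorem controller_linear_velocity_bounded
    (R μ lamt vc T u v uψ : ℝ)
    (hR : 0 < R) (hμ : 0 < μ) (hlamt : 0 < lamt) (hT : 0 < T)
    (huψ0 : 0 ≤ uψ) (huψ1 : uψ < π / 2)
    (lams δ r l S Ri γs uvc : ℝ)
    (hlams : lams = if v ≤ vc then u else u * Real.exp (-(v - vc) / T))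
    (hδ : δ = lams / lamt)
    (hr : r = R / Real.cos uψ)
    (hl : l = 2 * R * Real.tan uψ)
    (hS : S = (2 * r + l) / 2)
    (hRi : Ri = R / μ + Real.sqrt ((S - r) ^ 2 * (S - l) / S))
    (hγs : γs = 1 / Ri)
    (huvc : uvc = δ * (1 + R * γs)) :
    |uvc| ≤ |u| * (1 + μ) / lamt := by
  have hsq : 0 ≤ Real.sqrt ((S - r) ^ 2 * (S - l) / S) := Real.sqrt_nonneg _
  have hRi_ge : R / μ ≤ Ri := by rw [hRi]; linarith
  have hRipos : 0 < Ri := lt_of_lt_of_le (div_pos hR hμ) hRi_ge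
  have hγpos : 0 < γs := by rw [hγs]; positivity
  have hRγ : R * γs ≤ μ := by
    rw [hγs, mul_one_div]
    rw [div_le_iff₀ hRipos]
    rw [div_le_iff₀ hμ] at hRi_ge
    linarith
  have hlams_le : |lams| ≤ |u| := by
    rw [hlams]
    split_ifs with h
    · exact le_rfl
    · rw [abs_mul, Real.abs_exp]
      apply mul_le_of_le_one_right (abs_nonneg _)
      rw [Real.exp_le_one_iff]
      have : vc < v := lt_of_not_ge h
      have := hT
      apply div_nonpos_of_nonpos_of_nonneg <;> linarith
  have h1 : (0:ℝ) < 1 + R * γs := by positivity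
  have habs : |uvc| = |lams| / lamt * (1 + R * γs) := by
    rw [huvc, hδ, abs_mul, abs_div, abs_of_pos hlamt, abs_of_pos h1]
  rw [habs]
  rw [div_mul_eq_mul_div, div_le_div_iff₀ hlamt hlamt]
  have h2 : |lams| * (1 + R * γs) ≤ |u| * (1 + μ) := by
    apply mul_le_mul hlams_le (by linarith) (le_of_lt h1) (abs_nonneg _)
  nlinarith [abs_nonneg u, hlamt]
end
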